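/- Fix λ ∈ [0,1) and define G_λ : ℝ² → ℝ by G_λ(x₁,x₂) = (√(1−λ²)/(4π)) exp(−((1+λ)x₁² + (1−λ)x₂²)/4). Then G_λ satisfies the linear equation (L_⊥ + λM)G_λ = 0 pointwise on ℝ², where L_⊥ = Δ + (1/2)(x₁∂₁ + x₂∂₂) + 1 and M = (1/2)(x₁∂₁ − x₂∂₂); moreover ∫_{ℝ²} G_λ(x) dx = 1. -/

import Mathlib

/-!
Write `a = 1 + λ`, `b = 1 - λ`. Each partial derivative of the Gaussian
`exp (-(a x₁² + b x₂²) / 4)` multiplies it by a linear factor, so `(L_⊥ + λ M) G_λ` is `G_λ` times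
a polynomial; the quadratic terms from `Δ` and from the drift `(a x₁ ∂₁ + b x₂ ∂₂) / 2` cancel, and
the constant term is `1 - (a + b) / 2 = 0`. The mass is a product of two one-dimensional Gaussian
integrals, `4π / √(ab) = 4π / √(1 - λ²)`.
-/

open Real MeasureTheory

noncomputable section

/-- Partial derivative in the first variable of a function on `ℝ²`. -/
def q1 (f : ℝ × ℝ → ℝ) (x : ℝ × ℝ) : ℝ := deriv (fun s => f (s, x.2)) x.1

/-- Partial derivative in the second variable of a function on `ℝ²`. -/
def q2 (f : ℝ × ℝ → ℝ) (x : ℝ × ℝ) : ℝ := deriv (fun s => f (x.1, s)) x.2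

/-- Laplacian on `ℝ²`. -/
def lap2 (f : ℝ × ℝ → ℝ) (x : ℝ × ℝ) : ℝ := q1 (q1 f) x + q2 (q2 f) x

/-- The operator `L_⊥ = Δ + (1/2) x_⊥·∇ + 1`. -/
def Lperp (f : ℝ × ℝ → ℝ) (x : ℝ × ℝ) : ℝ :=
  lap2 f x + (1 / 2) * (x.1 * q1 f x + x.2 * q2 f x) + f x

/-- The operator `M = (1/2)(x₁∂₁ − x₂∂₂)`. -/
def Mop (f : ℝ × ℝ → ℝ) (x : ℝ × ℝ) : ℝ :=
  (1 / 2) * (x.1 * q1 f x - x.2 * q2 f x)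

def anisoGauss (c a b : ℝ) (x : ℝ × ℝ) : ℝ :=
  c * exp (-(a * x.1 ^ 2 + b * x.2 ^ 2) / 4)

section anisoGauss

variable (c a b : ℝ)

lemma hasDerivAt_anisoGauss_fst (s t : ℝ) :
    HasDerivAt (fun s => anisoGauss c a b (s, t)) (-a / 2 * s * anisoGauss c a b (s, t)) s := by
  have hexp : HasDerivAt (fun s : ℝ => -(a * s ^ 2 + b * t ^ 2) / 4) (-a / 2 * s) s :=
    ((((hasDerivAt_pow 2 s).const_mul a).add_const (b * t ^ 2)).neg.div_const 4).congr_deriv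
      (by ring)
  exact (hexp.exp.const_mul c).congr_deriv (by rw [anisoGauss]; ring)

lemma hasDerivAt_anisoGauss_snd (s t : ℝ) :
    HasDerivAt (fun t => anisoGauss c a b (s, t)) (-b / 2 * t * anisoGauss c a b (s, t)) t := by
  have hexp : HasDerivAt (fun t : ℝ => -(a * s ^ 2 + b * t ^ 2) / 4) (-b / 2 * t) t :=
    ((((hasDerivAt_pow 2 t).const_mul b).const_add (a * s ^ 2)).neg.div_const 4).congr_deriv
      (by ring)
  exact (hexp.exp.const_mul c).congr_deriv (by rw [anisoGauss]; ring)

lemma q1_anisoGauss : q1 (anisoGauss c a b) = fun x => -a / 2 * x.1 * anisoGauss c a b x :=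
  funext fun x => (hasDerivAt_anisoGauss_fst c a b x.1 x.2).deriv

lemma q2_anisoGauss : q2 (anisoGauss c a b) = fun x => -b / 2 * x.2 * anisoGauss c a b x :=
  funext fun x => (hasDerivAt_anisoGauss_snd c a b x.1 x.2).deriv

lemma q1_q1_anisoGauss (x : ℝ × ℝ) :
    q1 (q1 (anisoGauss c a b)) x = (a ^ 2 * x.1 ^ 2 / 4 - a / 2) * anisoGauss c a b x := by
  rw [q1_anisoGauss]
  exact ((hasDerivAt_const_mul (-a / 2)).fun_mul
    (hasDerivAt_anisoGauss_fst c a b x.1 x.2)).deriv.trans (by ring)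

lemma q2_q2_anisoGauss (x : ℝ × ℝ) :
    q2 (q2 (anisoGauss c a b)) x = (b ^ 2 * x.2 ^ 2 / 4 - b / 2) * anisoGauss c a b x := by
  rw [q2_anisoGauss]
  exact ((hasDerivAt_const_mul (-b / 2)).fun_mul
    (hasDerivAt_anisoGauss_snd c a b x.1 x.2)).deriv.trans (by ring)

variable {a b}

lemma integral_anisoGauss (ha : 0 < a) (hb : 0 < b) :
    ∫ x, anisoGauss c a b x = c * (4 * π / √(a * b)) := by
  have hprod : anisoGauss c a b =
      fun x : ℝ × ℝ => (c * exp (-(a / 4) * x.1 ^ 2)) * exp (-(b / 4) * x.2 ^ 2) := by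
    funext x
    rw [anisoGauss, mul_assoc, ← exp_add]
    ring_nf
  rw [hprod, Measure.volume_eq_prod, integral_prod_mul (fun s => c * exp (-(a / 4) * s ^ 2))
    (fun s => exp (-(b / 4) * s ^ 2)), integral_const_mul, integral_gaussian, integral_gaussian,
    mul_assoc, ← sqrt_mul (by positivity)]
  congr 1
  rw [eq_div_iff (by positivity), ← sqrt_mul (by positivity),
    show π / (a / 4) * (π / (b / 4)) * (a * b) = (4 * π) ^ 2 by field_simp,
    sqrt_sq (by positivity)]

end anisoGauss

/-- The Gaussian profile `G_λ` satisfies `(L_⊥ + λ M) G_λ = 0` pointwise on `ℝ²`,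
and has total integral `1`. -/
theorem Glambda_kernel_and_mass (lam : ℝ) (h0 : 0 ≤ lam) (h1 : lam < 1)
    (G : ℝ × ℝ → ℝ)
    (hG : G = fun x =>
      Real.sqrt (1 - lam ^ 2) / (4 * π) *
        Real.exp (-((1 + lam) * x.1 ^ 2 + (1 - lam) * x.2 ^ 2) / 4)) :
    (∀ x : ℝ × ℝ, Lperp G x + lam * Mop G x = 0) ∧
    (∫ x : ℝ × ℝ, G x) = 1 := by
  replace hG : G = anisoGauss (√(1 - lam ^ 2) / (4 * π)) (1 + lam) (1 - lam) := hG
  subst hG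
  refine ⟨fun x => ?_, ?_⟩
  · rw [Lperp, Mop, lap2, q1_q1_anisoGauss, q2_q2_anisoGauss, q1_anisoGauss, q2_anisoGauss]
    ring
  · have hsqrt : 0 < √(1 - lam ^ 2) := sqrt_pos.2 (by nlinarith)
    rw [integral_anisoGauss _ (by linarith) (by linarith),
      show (1 + lam) * (1 - lam) = 1 - lam ^ 2 by ring]
    field_simp
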